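/- For every fixed real number f, the function μ ↦ μ·log(1 + e^{f/μ}) is monotonically nondecreasing on (0, ∞): if 0 < μ₁ ≤ μ₂ then μ₁·log(1 + e^{f/μ₁}) ≤ μ₂·log(1 + e^{f/μ₂}). Combined with the lower bound max{0,f} ≤ μ·log(1 + e^{f/μ}), this shows the LSE approximation of the penalty max{0,f} becomes more precise as μ decreases. -/
import Mathlib

lemma real_add_rpow_le_rpow_add {a b p : ℝ} (ha : 0 ≤ a) (hb : 0 ≤ b) (hp1 : 1 ≤ p) :
    a ^ p + b ^ p ≤ (a + b) ^ p := by
  have := NNReal.add_rpow_le_rpow_add (Real.toNNReal a) (Real.toNNReal b) hp1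
  have h := NNReal.coe_le_coe.2 this
  simpa [Real.coe_toNNReal _ ha, Real.coe_toNNReal _ hb, ← Real.toNNReal_add ha hb,
    Real.coe_toNNReal _ (add_nonneg ha hb), NNReal.coe_rpow] using h

/-- For fixed `f : ℝ`, the map `μ ↦ μ·log(1 + e^{f/μ})` is monotonically nondecreasing on
`(0, ∞)`: if `0 < μ₁ ≤ μ₂` then `μ₁·log(1 + e^{f/μ₁}) ≤ μ₂·log(1 + e^{f/μ₂})`. -/
theorem lse_monotone_in_mu (f μ₁ μ₂ : ℝ) (hμ₁ : 0 < μ₁) (h : μ₁ ≤ μ₂) :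
    μ₁ * Real.log (1 + Real.exp (f / μ₁)) ≤ μ₂ * Real.log (1 + Real.exp (f / μ₂)) := by
  have hμ₂ : 0 < μ₂ := lt_of_lt_of_le hμ₁ h
  set s : ℝ := μ₂ / μ₁ with hs
  have hs1 : 1 ≤ s := (one_le_div hμ₁).2 h
  set x : ℝ := Real.exp (f / μ₂) with hx
  have hx0 : 0 < x := Real.exp_pos _
  have hxs : Real.exp (f / μ₁) = x ^ s := by
    rw [hx, ← Real.exp_mul]
    rw [hs]
    field_simp
  have key : 1 + x ^ s ≤ (1 + x) ^ s := by
    have := real_add_rpow_le_rpow_add (a := 1) (b := x) zero_le_one hx0.le hs1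
    simpa using this
  have hlog : Real.log (1 + x ^ s) ≤ s * Real.log (1 + x) := by
    calc Real.log (1 + x ^ s) ≤ Real.log ((1 + x) ^ s) :=
          Real.log_le_log (by positivity) key
      _ = s * Real.log (1 + x) := Real.log_rpow (by positivity) s
  calc μ₁ * Real.log (1 + Real.exp (f / μ₁)) = μ₁ * Real.log (1 + x ^ s) := by rw [hxs]
    _ ≤ μ₁ * (s * Real.log (1 + x)) := by
        exact mul_le_mul_of_nonneg_left hlog hμ₁.le
    _ = μ₂ * Real.log (1 + x) := by
        rw [hs]; field_simp
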